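/- arXiv:1307.3382 — 5 statements merged into one kernel-verified Lean document; each statement's English description precedes it below -/
import Mathlib

section
/- There exists a constant C > 0, depending only on w_- and w_+, such that for all t > 0, δ > 0 and p ∈ [1, ∞]: ‖∂_x w^r_δ(·,t)‖_{L^p(ℝ)} ≤ C (w_+ − w_-)^{1/p} (δ + t)^{−1 + 1/p}. -/
/-!
Along the characteristic through `x` the solution is constant, `w(x, t) = w_δ(y)` with
`y + w_δ(y) t = x`, so `∂ₓw = w_δ'(y) / (1 + w_δ'(y) t) ≥ 0`. Since `0 ≤ w_δ' ≤ (w₊ - w₋)/(2δ)`,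
this is at most `max 1 ((w₊ - w₋)/2) / (δ + t)`; and since `w(·, t)` increases with values in
`[w₋, w₊]`, `‖∂ₓw‖_{L¹} ≤ w₊ - w₋`. The bound follows by interpolating between `L¹` and `L^∞`.
-/

open MeasureTheory Set Filter
open scoped ENNReal

theorem Real.hasDerivAt_tanh (x : ℝ) : HasDerivAt Real.tanh (1 / Real.cosh x ^ 2) x := by
  rw [show Real.tanh = fun y => Real.sinh y / Real.cosh y from funext Real.tanh_eq_sinh_div_cosh]
  refine ((Real.hasDerivAt_sinh x).div (Real.hasDerivAt_cosh x)
    (Real.cosh_pos x).ne').congr_deriv ?_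
  have := Real.cosh_sq_sub_sinh_sq x
  field_simp
  linarith

noncomputable def tanhProfile (wm wp δ x : ℝ) : ℝ :=
  (wp + wm) / 2 + (wp - wm) / 2 * Real.tanh (x / δ)

section TanhProfile

variable {wm wp δ : ℝ}

theorem hasDerivAt_tanhProfile (x : ℝ) :
    HasDerivAt (tanhProfile wm wp δ) ((wp - wm) / 2 / δ / Real.cosh (x / δ) ^ 2) x := by
  have h := (((Real.hasDerivAt_tanh (x / δ)).comp x ((hasDerivAt_id x).div_const δ)).const_mul
    ((wp - wm) / 2)).const_add ((wp + wm) / 2)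
  exact h.congr_deriv (by ring)

theorem tanhProfile_mem_Icc (h : wm ≤ wp) (x : ℝ) : tanhProfile wm wp δ x ∈ Icc wm wp := by
  have := Real.neg_one_lt_tanh (x / δ)
  have := Real.tanh_lt_one (x / δ)
  constructor <;> unfold tanhProfile <;> nlinarith

theorem tanhProfile_slope_nonneg (h : wm ≤ wp) (hδ : 0 ≤ δ) (x : ℝ) :
    0 ≤ (wp - wm) / 2 / δ / Real.cosh (x / δ) ^ 2 := by
  have := sub_nonneg.mpr h
  positivity

theorem tanhProfile_slope_mul_le (h : wm ≤ wp) (hδ : 0 < δ) (x : ℝ) :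
    (wp - wm) / 2 / δ / Real.cosh (x / δ) ^ 2 * δ ≤ (wp - wm) / 2 := by
  have hslope : 0 ≤ (wp - wm) / 2 / δ := by have := sub_nonneg.mpr h; positivity
  have hcosh : 1 ≤ Real.cosh (x / δ) ^ 2 := one_le_pow₀ (Real.one_le_cosh _)
  calc (wp - wm) / 2 / δ / Real.cosh (x / δ) ^ 2 * δ ≤ (wp - wm) / 2 / δ * δ :=
        mul_le_mul_of_nonneg_right (div_le_self hslope hcosh) hδ.le
    _ = (wp - wm) / 2 := by field_simp

end TanhProfile

section Characteristics

variable {f f' y : ℝ → ℝ} {t : ℝ}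

theorem continuous_of_add_mul_apply_eq (hf : Monotone f) (ht : 0 ≤ t)
    (hy : ∀ x, y x + f (y x) * t = x) : Continuous y := by
  have hF : StrictMono fun u => u + f u * t := strictMono_id.add_monotone (hf.mul_const ht)
  have hy_mono : Monotone y := fun a b hab => hF.le_iff_le.mp (by simpa only [hy] using hab)
  exact hy_mono.continuous_of_surjective fun u => ⟨u + f u * t, hF.injective (hy _)⟩

theorem hasDerivAt_comp_of_add_mul_apply_eq (hf : ∀ u, HasDerivAt f (f' u) u)
    (hf' : ∀ u, 0 ≤ f' u) (ht : 0 ≤ t) (hy : ∀ x, y x + f (y x) * t = x) (x : ℝ) :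
    HasDerivAt (fun x => f (y x)) (f' (y x) / (1 + f' (y x) * t)) x := by
  have hf_mono : Monotone f := monotone_of_deriv_nonneg (fun u => (hf u).differentiableAt)
    fun u => (hf u).deriv ▸ hf' u
  have hy_deriv : HasDerivAt y (1 + f' (y x) * t)⁻¹ x :=
    HasDerivAt.of_local_left_inverse (continuous_of_add_mul_apply_eq hf_mono ht hy).continuousAt
      ((hasDerivAt_id _).add ((hf (y x)).mul_const t))
      (by have := hf' (y x); positivity) (Eventually.of_forall hy)
  rw [div_eq_mul_inv]
  exact (hf (y x)).comp x hy_deriv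

end Characteristics

theorem div_one_add_mul_le_max_div_add {k d δ t : ℝ} (hk : 0 ≤ k) (hkd : k * δ ≤ d) (hδ : 0 < δ)
    (ht : 0 ≤ t) : k / (1 + k * t) ≤ max 1 d / (δ + t) := by
  rw [div_le_div_iff₀ (by positivity) (by positivity)]
  have hA1 : 1 ≤ max 1 d := le_max_left _ _
  have hAd : d ≤ max 1 d := le_max_right _ _
  nlinarith [mul_nonneg hk ht]

theorem lintegral_ofReal_deriv_le_of_mem_Icc {h g : ℝ → ℝ} {a b : ℝ}
    (hderiv : ∀ x, HasDerivAt h (g x) x) (hg : ∀ x, 0 ≤ g x) (hab : ∀ x, h x ∈ Icc a b) :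
    ∫⁻ x, ENNReal.ofReal (g x) ≤ ENNReal.ofReal (b - a) := by
  have hcover : AECover volume atTop fun n : ℕ => Ioc (-(n : ℝ)) n :=
    aecover_Ioc (tendsto_neg_atBot_iff.mpr tendsto_natCast_atTop_atTop) tendsto_natCast_atTop_atTop
  have hg_meas : Measurable g := by
    rw [show g = deriv h from funext fun x => (hderiv x).deriv.symm]
    exact measurable_deriv h
  refine le_of_tendsto' (hcover.lintegral_tendsto_of_nat hg_meas.ennreal_ofReal.aemeasurable)
    fun n => ?_
  have hn : -(n : ℝ) ≤ n := by linarith [(n.cast_nonneg : (0 : ℝ) ≤ n)]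
  have hint : IntegrableOn g (Ioc (-(n : ℝ)) n) :=
    intervalIntegral.integrableOn_deriv_of_nonneg
      (fun x _ => (hderiv x).continuousAt.continuousWithinAt) (fun x _ => hderiv x) fun x _ => hg x
  rw [← ofReal_integral_eq_lintegral_ofReal hint (ae_of_all _ hg),
    ← intervalIntegral.integral_of_le hn, intervalIntegral.integral_eq_sub_of_hasDerivAt
      (fun x _ => hderiv x) ((intervalIntegrable_iff_integrableOn_Ioc_of_le hn).mpr hint)]
  exact ENNReal.ofReal_le_ofReal (by linarith [(hab n).2, (hab (-n)).1])

theorem ENNReal.one_div_toReal_le_one {p : ℝ≥0∞} (hp : 1 ≤ p) : 1 / p.toReal ≤ 1 := by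
  rcases eq_or_ne p ∞ with rfl | hp_top
  · simp
  · exact div_le_one_of_le₀ (by simpa using ENNReal.toReal_mono hp_top hp) (by positivity)

theorem eLpNorm_le_rpow_mul_rpow_of_enorm_le {α E : Type*} [MeasurableSpace α] {μ : Measure α}
    [NormedAddCommGroup E] {f : α → E} {p M V : ℝ≥0∞} (hp : 1 ≤ p) (hM : M ≠ ∞)
    (hfM : ∀ᵐ x ∂μ, ‖f x‖ₑ ≤ M) (hfV : ∫⁻ x, ‖f x‖ₑ ∂μ ≤ V) :
    eLpNorm f p μ ≤ M ^ (1 - 1 / p.toReal) * V ^ (1 / p.toReal) := by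
  rcases eq_or_ne p ∞ with rfl | hp_top
  · simpa [eLpNorm_exponent_top] using eLpNormEssSup_le_of_ae_enorm_bound hfM
  set q := p.toReal
  have hq : 1 ≤ q := by simpa using ENNReal.toReal_mono hp_top hp
  have hpointwise : ∀ᵐ x ∂μ, ‖f x‖ₑ ^ q ≤ M ^ (q - 1) * ‖f x‖ₑ := by
    filter_upwards [hfM] with x hx
    calc ‖f x‖ₑ ^ q = ‖f x‖ₑ ^ (q - 1) * ‖f x‖ₑ ^ (1 : ℝ) := by
          rw [← ENNReal.rpow_add_of_nonneg _ _ (by linarith) zero_le_one, sub_add_cancel]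
      _ ≤ M ^ (q - 1) * ‖f x‖ₑ := by rw [ENNReal.rpow_one]; gcongr
  have hlint : ∫⁻ x, ‖f x‖ₑ ^ q ∂μ ≤ M ^ (q - 1) * V :=
    calc ∫⁻ x, ‖f x‖ₑ ^ q ∂μ ≤ ∫⁻ x, M ^ (q - 1) * ‖f x‖ₑ ∂μ := lintegral_mono_ae hpointwise
      _ = M ^ (q - 1) * ∫⁻ x, ‖f x‖ₑ ∂μ :=
          lintegral_const_mul' _ _ (ENNReal.rpow_ne_top_of_nonneg (by linarith) hM)
      _ ≤ M ^ (q - 1) * V := by gcongr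
  rw [eLpNorm_eq_lintegral_rpow_enorm_toReal (by positivity) hp_top]
  calc (∫⁻ x, ‖f x‖ₑ ^ q ∂μ) ^ (1 / q) ≤ (M ^ (q - 1) * V) ^ (1 / q) := by gcongr
    _ = M ^ (1 - 1 / q) * V ^ (1 / q) := by
        rw [ENNReal.mul_rpow_of_nonneg _ _ (by positivity), ← ENNReal.rpow_mul]
        congr 2
        field_simp

theorem ofReal_div_rpow_mul_rpow_le {A s V θ : ℝ} (hA : 1 ≤ A) (hs : 0 < s) (hV : 0 ≤ V)
    (hθ₀ : 0 ≤ θ) (hθ₁ : θ ≤ 1) :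
    ENNReal.ofReal (A / s) ^ (1 - θ) * ENNReal.ofReal V ^ θ ≤
      ENNReal.ofReal (A * V ^ θ * s ^ (-1 + θ)) := by
  have hA₀ : 0 ≤ A := by linarith
  rw [ENNReal.ofReal_rpow_of_nonneg (by positivity) (by linarith),
    ENNReal.ofReal_rpow_of_nonneg hV hθ₀, ← ENNReal.ofReal_mul (by positivity)]
  refine ENNReal.ofReal_le_ofReal ?_
  have hApow : A ^ (1 - θ) ≤ A := by
    simpa using Real.rpow_le_rpow_of_exponent_le hA (by linarith : 1 - θ ≤ 1)
  calc (A / s) ^ (1 - θ) * V ^ θ = A ^ (1 - θ) * (V ^ θ * s ^ (-1 + θ)) := by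
        rw [Real.div_rpow hA₀ hs.le, div_eq_mul_inv, ← Real.rpow_neg hs.le,
          show -(1 - θ) = -1 + θ by ring]
        ring
    _ ≤ A * (V ^ θ * s ^ (-1 + θ)) := by gcongr
    _ = A * V ^ θ * s ^ (-1 + θ) := by ring

/-- the L^p bound on the first spatial derivative of the Burgers
solution: ‖∂ₓ w^r_δ(·,t)‖_{L^p} ≤ C (w₊−w₋)^{1/p} (δ+t)^{−1+1/p} for all t > 0,
δ > 0 and p ∈ [1,∞], with C depending only on w₋, w₊. -/
theorem burgers_first_derivative_Lp_bound (wm wp : ℝ) (hw : wm < wp) :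
    ∃ C > (0 : ℝ), ∀ δ : ℝ, 0 < δ →
      ∀ wδ : ℝ → ℝ,
        (∀ x, wδ x = (wp + wm) / 2 + (wp - wm) / 2 * Real.tanh (x / δ)) →
      ∀ x₀ : ℝ → ℝ → ℝ,
        (∀ x t : ℝ, 0 ≤ t → x₀ x t + wδ (x₀ x t) * t = x) →
      ∀ w : ℝ → ℝ → ℝ,
        (∀ x t : ℝ, 0 ≤ t → w x t = wδ (x₀ x t)) →
      ∀ t : ℝ, 0 < t → ∀ p : ℝ≥0∞, 1 ≤ p →
        eLpNorm (fun x => deriv (fun z => w z t) x) p volume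
          ≤ ENNReal.ofReal
              (C * (wp - wm) ^ (1 / p.toReal) * (δ + t) ^ (-1 + 1 / p.toReal)) := by
  refine ⟨max 1 ((wp - wm) / 2), by positivity, ?_⟩
  intro δ hδ wδ hwδ x₀ hx₀ w hwx t ht p hp
  obtain rfl : wδ = tanhProfile wm wp δ := funext hwδ
  set k : ℝ → ℝ := fun u => (wp - wm) / 2 / δ / Real.cosh (u / δ) ^ 2
  have hk : ∀ u, 0 ≤ k u := tanhProfile_slope_nonneg hw.le hδ.le
  set g : ℝ → ℝ := fun x => k (x₀ x t) / (1 + k (x₀ x t) * t)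
  have hg : ∀ x, 0 ≤ g x := fun x => by have := hk (x₀ x t); positivity
  have hderiv : ∀ x, HasDerivAt (fun z => w z t) (g x) x := by
    rw [show (fun z => w z t) = fun z => tanhProfile wm wp δ (x₀ z t) from
      funext fun z => hwx z t ht.le]
    exact hasDerivAt_comp_of_add_mul_apply_eq hasDerivAt_tanhProfile hk ht.le
      fun x => hx₀ x t ht.le
  have hLinf : ∀ x, ‖g x‖ₑ ≤ ENNReal.ofReal (max 1 ((wp - wm) / 2) / (δ + t)) := fun x => by
    rw [Real.enorm_eq_ofReal (hg x)]
    exact ENNReal.ofReal_le_ofReal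
      (div_one_add_mul_le_max_div_add (hk _) (tanhProfile_slope_mul_le hw.le hδ _) hδ ht.le)
  have hL1 : ∫⁻ x, ‖g x‖ₑ ≤ ENNReal.ofReal (wp - wm) := by
    simp_rw [Real.enorm_eq_ofReal (hg _)]
    exact lintegral_ofReal_deriv_le_of_mem_Icc hderiv hg fun x => by
      rw [hwx x t ht.le]; exact tanhProfile_mem_Icc hw.le _
  rw [show (fun x => deriv (fun z => w z t) x) = g from funext fun x => (hderiv x).deriv]
  calc eLpNorm g p volume
      ≤ ENNReal.ofReal (max 1 ((wp - wm) / 2) / (δ + t)) ^ (1 - 1 / p.toReal)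
          * ENNReal.ofReal (wp - wm) ^ (1 / p.toReal) :=
        eLpNorm_le_rpow_mul_rpow_of_enorm_le hp ENNReal.ofReal_ne_top (ae_of_all _ hLinf) hL1
    _ ≤ _ := ofReal_div_rpow_mul_rpow_le (le_max_left _ _) (by linarith) (by linarith)
        (by positivity) (ENNReal.one_div_toReal_le_one hp)
end

section
/- For all x ∈ ℝ, t ≥ 0 and δ > 0, the second spatial derivative of the Burgers solution satisfies the pointwise bound |∂²_x w^r_δ(x,t)| ≤ (4/δ) · ∂_x w^r_δ(x,t). -/
/-!
Along characteristics `w(·, t) = f ∘ X`, where `X` inverts `y ↦ y + f y * t`. Differentiating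
`X z + f (X z) * t = z` gives `w_x = f'(X) / (1 + t f'(X))` and `w_xx = f''(X) / (1 + t f'(X))³`.
As `f' ≥ 0` the denominator is at least `1`, so a bound `|f''| ≤ K f'` on the data propagates to
`|w_xx| ≤ K w_x`. For the tanh profile `f'' = -(2/δ) tanh(·/δ) f'`, so `K = 2/δ` already works.
-/

open Real

theorem Real.hasDerivAt_tanh_s6 (x : ℝ) : HasDerivAt tanh (1 - tanh x ^ 2) x := by
  have hcosh : cosh x ≠ 0 := (cosh_pos x).ne'
  have h := (hasDerivAt_sinh x).div (hasDerivAt_cosh x) hcosh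
  rw [show tanh = fun y => sinh y / cosh y from funext tanh_eq_sinh_div_cosh]
  exact h.congr_deriv (by field_simp)

namespace Burgers

variable {f f' f'' X : ℝ → ℝ} {t : ℝ}

/-- `X z` is the foot of the characteristic through `(z, t)`. It is continuous, being a monotone
surjective left inverse of the strictly monotone map `y ↦ y + f y * t`. -/
theorem hasDerivAt_foot (hf : ∀ y, HasDerivAt f (f' y) y) (hf'_nonneg : ∀ y, 0 ≤ f' y)
    (ht : 0 ≤ t) (hX : ∀ z, X z + f (X z) * t = z) (z : ℝ) :
    HasDerivAt X (1 + f' (X z) * t)⁻¹ z := by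
  set h : ℝ → ℝ := fun y => y + f y * t
  have hf_mono : Monotone f := monotone_of_deriv_nonneg (fun y => (hf y).differentiableAt)
    fun y => (hf y).deriv ▸ hf'_nonneg y
  have hh_mono : StrictMono h := strictMono_id.add_monotone fun _ _ hab =>
    mul_le_mul_of_nonneg_right (hf_mono hab) ht
  have hX_mono : Monotone X := fun a b hab => hh_mono.le_iff_le.mp (by simpa [h, hX] using hab)
  have hX_surj : Function.Surjective X := fun y => ⟨h y, hh_mono.injective (hX (h y))⟩
  have hh : HasDerivAt h (1 + f' (X z) * t) (X z) := (hasDerivAt_id _).add ((hf _).mul_const t)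
  exact hh.of_local_left_inverse
    (hX_mono.continuous_of_surjective hX_surj).continuousAt
    (by have := mul_nonneg (hf'_nonneg (X z)) ht; positivity) (.of_forall hX)

theorem hasDerivAt_comp_foot (hf : ∀ y, HasDerivAt f (f' y) y) (hf'_nonneg : ∀ y, 0 ≤ f' y)
    (ht : 0 ≤ t) (hX : ∀ z, X z + f (X z) * t = z) (z : ℝ) :
    HasDerivAt (fun z => f (X z)) (f' (X z) / (1 + f' (X z) * t)) z :=
  (hf (X z)).comp z (hasDerivAt_foot hf hf'_nonneg ht hX z)

theorem hasDerivAt_deriv_comp_foot (hf : ∀ y, HasDerivAt f (f' y) y)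
    (hf' : ∀ y, HasDerivAt f' (f'' y) y) (hf'_nonneg : ∀ y, 0 ≤ f' y)
    (ht : 0 ≤ t) (hX : ∀ z, X z + f (X z) * t = z) (z : ℝ) :
    HasDerivAt (fun z => f' (X z) / (1 + f' (X z) * t)) (f'' (X z) / (1 + f' (X z) * t) ^ 3) z := by
  have hP : 1 + f' (X z) * t ≠ 0 := by have := mul_nonneg (hf'_nonneg (X z)) ht; positivity
  have hquot := (hf' (X z)).div (((hf' (X z)).mul_const t).const_add 1) hP
  refine (hquot.comp z (hasDerivAt_foot hf hf'_nonneg ht hX z)).congr_deriv ?_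
  field_simp
  ring

theorem iteratedDeriv_two_comp_foot (hf : ∀ y, HasDerivAt f (f' y) y)
    (hf' : ∀ y, HasDerivAt f' (f'' y) y) (hf'_nonneg : ∀ y, 0 ≤ f' y)
    (ht : 0 ≤ t) (hX : ∀ z, X z + f (X z) * t = z) (z : ℝ) :
    iteratedDeriv 2 (fun z => f (X z)) z = f'' (X z) / (1 + f' (X z) * t) ^ 3 := by
  have hderiv : deriv (fun z => f (X z)) = fun z => f' (X z) / (1 + f' (X z) * t) :=
    funext fun z => (hasDerivAt_comp_foot hf hf'_nonneg ht hX z).deriv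
  rw [iteratedDeriv_succ, iteratedDeriv_one, hderiv,
    (hasDerivAt_deriv_comp_foot hf hf' hf'_nonneg ht hX z).deriv]

theorem abs_iteratedDeriv_two_comp_foot_le {K : ℝ} (hf : ∀ y, HasDerivAt f (f' y) y)
    (hf' : ∀ y, HasDerivAt f' (f'' y) y) (hf'_nonneg : ∀ y, 0 ≤ f' y)
    (hK : ∀ y, |f'' y| ≤ K * f' y) (ht : 0 ≤ t) (hX : ∀ z, X z + f (X z) * t = z) (z : ℝ) :
    |iteratedDeriv 2 (fun z => f (X z)) z| ≤ K * deriv (fun z => f (X z)) z := by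
  rw [iteratedDeriv_two_comp_foot hf hf' hf'_nonneg ht hX,
    (hasDerivAt_comp_foot hf hf'_nonneg ht hX z).deriv]
  set P := 1 + f' (X z) * t
  have hP : 1 ≤ P := le_add_of_nonneg_right (mul_nonneg (hf'_nonneg (X z)) ht)
  have hKf' : 0 ≤ K * f' (X z) := (abs_nonneg _).trans (hK _)
  rw [abs_div, abs_of_pos (pow_pos (zero_lt_one.trans_le hP) 3), mul_div_assoc']
  calc |f'' (X z)| / P ^ 3 ≤ K * f' (X z) / P ^ 3 := by gcongr; exact hK _
    _ ≤ K * f' (X z) / P := div_le_div_of_nonneg_left hKf' (by positivity)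
        (le_self_pow₀ hP (by norm_num))

section TanhProfile

variable (a c δ : ℝ)

theorem hasDerivAt_tanh_div (y : ℝ) :
    HasDerivAt (fun y => tanh (y / δ)) ((1 - tanh (y / δ) ^ 2) / δ) y := by
  have h := (hasDerivAt_tanh_s6 (y / δ)).comp y ((hasDerivAt_id y).div_const δ)
  exact h.congr_deriv (by ring)

theorem hasDerivAt_tanh_profile (y : ℝ) :
    HasDerivAt (fun y => a + c * tanh (y / δ)) (c * (1 - tanh (y / δ) ^ 2) / δ) y :=
  (((hasDerivAt_tanh_div δ y).const_mul c).const_add a).congr_deriv (by ring)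

theorem hasDerivAt_tanh_profile_deriv (y : ℝ) :
    HasDerivAt (fun y => c * (1 - tanh (y / δ) ^ 2) / δ)
      (-2 / δ * tanh (y / δ) * (c * (1 - tanh (y / δ) ^ 2) / δ)) y :=
  (((((hasDerivAt_tanh_div δ y).pow 2).const_sub 1).const_mul c).div_const δ).congr_deriv (by ring)

variable {c δ}

theorem tanh_profile_deriv_nonneg (hc : 0 ≤ c) (hδ : 0 ≤ δ) (y : ℝ) :
    0 ≤ c * (1 - tanh (y / δ) ^ 2) / δ := by
  have := tanh_sq_lt_one (y / δ)
  have : 0 ≤ 1 - tanh (y / δ) ^ 2 := by linarith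
  positivity

theorem abs_tanh_profile_deriv_two_le (hc : 0 ≤ c) (hδ : 0 ≤ δ) (y : ℝ) :
    |-2 / δ * tanh (y / δ) * (c * (1 - tanh (y / δ) ^ 2) / δ)|
      ≤ 2 / δ * (c * (1 - tanh (y / δ) ^ 2) / δ) := by
  have hg' := tanh_profile_deriv_nonneg hc hδ y
  rw [abs_mul, abs_mul, abs_of_nonneg hg', abs_div, abs_neg, abs_two, abs_of_nonneg hδ]
  have := abs_tanh_lt_one (y / δ)
  gcongr
  exact mul_le_of_le_one_right (by positivity) this.le

end TanhProfile

end Burgers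

open Burgers in
/-- pointwise bound |∂²ₓ w^r_δ(x,t)| ≤ (4/δ) ∂ₓ w^r_δ(x,t)
for the Burgers solution with smoothed monotone data. -/
theorem burgers_second_derivative_pointwise_bound
    (wm wp δ : ℝ) (hw : wm < wp) (hδ : 0 < δ)
    (wδ : ℝ → ℝ)
    (hwδ : ∀ x, wδ x = (wp + wm) / 2 + (wp - wm) / 2 * Real.tanh (x / δ))
    (x₀ : ℝ → ℝ → ℝ)
    (hx₀ : ∀ x t : ℝ, 0 ≤ t → x₀ x t + wδ (x₀ x t) * t = x)
    (w : ℝ → ℝ → ℝ)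
    (hwsol : ∀ x t : ℝ, 0 ≤ t → w x t = wδ (x₀ x t)) :
    ∀ x t : ℝ, 0 ≤ t →
      |iteratedDeriv 2 (fun z => w z t) x| ≤ 4 / δ * deriv (fun z => w z t) x := by
  intro x t ht
  obtain rfl : wδ = fun y => (wp + wm) / 2 + (wp - wm) / 2 * tanh (y / δ) := funext hwδ
  have hc : 0 ≤ (wp - wm) / 2 := by linarith
  have hK (y : ℝ) : |-2 / δ * tanh (y / δ) * ((wp - wm) / 2 * (1 - tanh (y / δ) ^ 2) / δ)|
      ≤ 4 / δ * ((wp - wm) / 2 * (1 - tanh (y / δ) ^ 2) / δ) :=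
    (abs_tanh_profile_deriv_two_le hc hδ.le y).trans
      (by gcongr; exacts [tanh_profile_deriv_nonneg hc hδ.le y, by norm_num])
  rw [show (fun z => w z t) = fun z => _ from funext fun z => hwsol z t ht]
  exact abs_iteratedDeriv_two_comp_foot_le (hasDerivAt_tanh_profile _ _ δ)
    (hasDerivAt_tanh_profile_deriv _ δ) (tanh_profile_deriv_nonneg hc hδ.le) hK ht
    (fun z => hx₀ z t ht) x
end

section
/- For every t ≥ 0, the map x₀ ↦ x₀ + w_δ(x₀) t is a strictly increasing bijection from ℝ onto ℝ; denoting its inverse by x ↦ x₀(x,t), the function w(x,t) = w_δ(x₀(x,t)) is smooth on ℝ × [0,∞), satisfies w(x,0) = w_δ(x) and the Burgers equation ∂_t w + w ∂_x w = 0, and its derivatives are given by ∂_x w(x,t) = w_δ′(x₀(x,t)) / (1 + t w_δ′(x₀(x,t))) and ∂_t w(x,t) = −w_δ(x₀(x,t)) w_δ′(x₀(x,t)) / (1 + t w_δ′(x₀(x,t))). -/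
set_option linter.unusedSectionVars false
set_option linter.unusedVariables false

open Set

namespace BurgersAux

lemma tanh_hasDerivAt (y : ℝ) :
    HasDerivAt Real.tanh (1 / Real.cosh y ^ 2) y := by
  have h := ((Real.hasDerivAt_sinh y).div (Real.hasDerivAt_cosh y)
    (ne_of_gt (Real.cosh_pos y)))
  have he : (fun x => Real.sinh x / Real.cosh x) = Real.tanh := by
    funext x; rw [Real.tanh_eq_sinh_div_cosh]
  rw [show (Real.sinh / Real.cosh) = Real.tanh from he] at h
  refine h.congr_deriv ?_
  have := Real.cosh_sq_sub_sinh_sq y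
  field_simp
  nlinarith [Real.cosh_pos y]

lemma contDiff_sinh : ContDiff ℝ (⊤ : ℕ∞) Real.sinh := by
  have : Real.sinh = fun x => (Real.exp x - Real.exp (-x)) / 2 := funext Real.sinh_eq
  rw [this]
  exact ((Real.contDiff_exp.sub (Real.contDiff_exp.comp contDiff_neg)).div_const 2)

lemma contDiff_cosh : ContDiff ℝ (⊤ : ℕ∞) Real.cosh := by
  have : Real.cosh = fun x => (Real.exp x + Real.exp (-x)) / 2 := funext Real.cosh_eq
  rw [this]
  exact ((Real.contDiff_exp.add (Real.contDiff_exp.comp contDiff_neg)).div_const 2)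

lemma contDiff_tanh : ContDiff ℝ (⊤ : ℕ∞) Real.tanh := by
  have : Real.tanh = fun x => Real.sinh x / Real.cosh x :=
    funext fun x => Real.tanh_eq_sinh_div_cosh x
  rw [this]
  exact contDiff_sinh.div contDiff_cosh (fun x => ne_of_gt (Real.cosh_pos x))

lemma abs_tanh_le (y : ℝ) : |Real.tanh y| ≤ 1 := by
  rw [Real.tanh_eq_sinh_div_cosh, abs_div, abs_of_pos (Real.cosh_pos y),
    div_le_one (Real.cosh_pos y), Real.sinh_eq, Real.cosh_eq]
  have h1 := Real.exp_pos y
  have h2 := Real.exp_pos (-y)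
  rw [abs_div]
  rw [abs_of_pos (by norm_num : (0:ℝ) < 2)]
  have : |Real.exp y - Real.exp (-y)| ≤ Real.exp y + Real.exp (-y) := by
    cases abs_cases (Real.exp y - Real.exp (-y)) with
    | inl h => rw [h.1]; linarith
    | inr h => rw [h.1]; linarith
  linarith



section
variable (wm wp δ : ℝ) (hw : wm < wp) (hδ : 0 < δ) (wδ : ℝ → ℝ)
  (hwδ : ∀ x, wδ x = (wp + wm) / 2 + (wp - wm) / 2 * Real.tanh (x / δ))

include hwδ hδ hw

lemma wD_hasDerivAt (z : ℝ) :
    HasDerivAt wδ ((wp - wm) / 2 * (1 / Real.cosh (z / δ) ^ 2) / δ) z := by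
  have hfun : wδ = fun x => (wp + wm) / 2 + (wp - wm) / 2 * Real.tanh (x / δ) :=
    funext hwδ
  rw [hfun]
  have h1 : HasDerivAt (fun x : ℝ => x / δ) (1 / δ) z := by
    simpa using (hasDerivAt_id z).div_const δ
  have h2 := ((tanh_hasDerivAt (z / δ)).comp z h1).const_mul ((wp - wm) / 2)
  have h3 := h2.const_add ((wp + wm) / 2)
  refine h3.congr_deriv ?_
  ring

lemma wD_deriv (z : ℝ) :
    deriv wδ z = (wp - wm) / 2 * (1 / Real.cosh (z / δ) ^ 2) / δ :=
  (wD_hasDerivAt wm wp δ hw hδ wδ hwδ z).deriv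

lemma wD_deriv_pos (z : ℝ) : 0 < deriv wδ z := by
  rw [wD_deriv wm wp δ hw hδ wδ hwδ z]
  have hc := Real.cosh_pos (z / δ)
  have h1 : (0:ℝ) < 1 / Real.cosh (z / δ) ^ 2 := one_div_pos.mpr (pow_pos hc 2)
  have h2 : (0:ℝ) < (wp - wm) / 2 := by linarith
  exact div_pos (mul_pos h2 h1) hδ

lemma wD_deriv_le (z : ℝ) : deriv wδ z ≤ (wp - wm) / 2 / δ := by
  rw [wD_deriv wm wp δ hw hδ wδ hwδ z]
  have h1 := Real.one_le_cosh (z / δ)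
  have h2 : (1:ℝ) / Real.cosh (z / δ) ^ 2 ≤ 1 := by
    rw [div_le_one (by positivity)]
    nlinarith
  have hwm : (0:ℝ) < (wp - wm) / 2 := by linarith
  calc (wp - wm) / 2 * (1 / Real.cosh (z / δ) ^ 2) / δ
      ≤ (wp - wm) / 2 * 1 / δ := by gcongr
    _ = (wp - wm) / 2 / δ := by ring

lemma wD_abs_le (z : ℝ) : |wδ z| ≤ |(wp + wm) / 2| + |(wp - wm) / 2| := by
  rw [hwδ z]
  calc |(wp + wm) / 2 + (wp - wm) / 2 * Real.tanh (z / δ)|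
      ≤ |(wp + wm) / 2| + |(wp - wm) / 2 * Real.tanh (z / δ)| := abs_add_le _ _
    _ ≤ |(wp + wm) / 2| + |(wp - wm) / 2| := by
        rw [abs_mul]
        have := abs_tanh_le (z / δ)
        nlinarith [abs_nonneg ((wp - wm) / 2)]

lemma wD_contDiff : ContDiff ℝ (⊤ : ℕ∞) wδ := by
  have hfun : wδ = fun x => (wp + wm) / 2 + (wp - wm) / 2 * Real.tanh (x / δ) :=
    funext hwδ
  rw [hfun]
  exact contDiff_const.add (contDiff_const.mul (contDiff_tanh.comp (contDiff_id.div_const δ)))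

end


theorem burgers_aux (wδ : ℝ → ℝ) (hcd : ContDiff ℝ (⊤:ℕ∞) wδ)
    (hD : ∀ z, HasDerivAt wδ (deriv wδ z) z)
    (M C : ℝ) (hM : 0 < M)
    (hdpos : ∀ z, 0 < deriv wδ z) (hdle : ∀ z, deriv wδ z ≤ M)
    (hb : ∀ z, |wδ z| ≤ C) :
    (∀ t : ℝ, 0 ≤ t →
      StrictMono (fun z : ℝ => z + wδ z * t) ∧
      Function.Bijective (fun z : ℝ => z + wδ z * t)) ∧
    (∀ x₀ : ℝ → ℝ → ℝ,
      (∀ x t : ℝ, 0 ≤ t → x₀ x t + wδ (x₀ x t) * t = x) →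
      ∀ w : ℝ → ℝ → ℝ,
        (∀ x t : ℝ, 0 ≤ t → w x t = wδ (x₀ x t)) →
        ContDiffOn ℝ (⊤ : ℕ∞) (fun q : ℝ × ℝ => w q.1 q.2)
          (Set.univ ×ˢ Set.Ici 0) ∧
        (∀ x : ℝ, w x 0 = wδ x) ∧
        (∀ x t : ℝ, 0 ≤ t →
          derivWithin (fun s => w x s) (Set.Ici 0) t
              + w x t * deriv (fun z => w z t) x = 0) ∧
        (∀ x t : ℝ, 0 ≤ t →
          deriv (fun z => w z t) x
            = deriv wδ (x₀ x t) / (1 + t * deriv wδ (x₀ x t))) ∧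
        (∀ x t : ℝ, 0 ≤ t →
          derivWithin (fun s => w x s) (Set.Ici 0) t
            = -(wδ (x₀ x t) * deriv wδ (x₀ x t)) / (1 + t * deriv wδ (x₀ x t)))) := by
  have hn1 : (1 : WithTop ℕ∞) ≤ ((⊤:ℕ∞) : WithTop ℕ∞) := by exact_mod_cast le_top
  set ε : ℝ := 1 / (2 * M) with hεdef
  have hε : 0 < ε := by positivity
  -- positivity of 1 + wδ' z * t on the strip
  have hstrip : ∀ z t : ℝ, -ε < t → 0 < 1 + deriv wδ z * t := by
    intro z t ht
    rcases le_or_gt 0 t with h | h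
    · nlinarith [hdpos z, mul_nonneg (hdpos z).le h]
    · have h1 : deriv wδ z * t ≥ M * t := by
        nlinarith [hdle z, hdpos z]
      have h2 : M * -ε < M * t := mul_lt_mul_of_pos_left ht hM
      have h3 : M * (-ε) = -(1/2 : ℝ) := by
        rw [hεdef]; field_simp
      nlinarith
  -- strict monotonicity on the strip
  have hmono : ∀ t : ℝ, -ε < t → StrictMono (fun z : ℝ => z + wδ z * t) := by
    intro t ht
    apply strictMono_of_deriv_pos
    intro z
    have hfd : HasDerivAt (fun z : ℝ => z + wδ z * t) (1 + deriv wδ z * t) z :=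
      (hasDerivAt_id z).add ((hD z).mul_const t)
    rw [hfd.deriv]
    exact hstrip z t ht
  have hC : 0 ≤ C := le_trans (abs_nonneg _) (hb 0)
  -- surjectivity (for every t)
  have hsurj : ∀ t x : ℝ, ∃ z, z + wδ z * t = x := by
    intro t x
    set B : ℝ := C * |t| + 1 with hB
    have hf : Continuous (fun z : ℝ => z + wδ z * t) :=
      continuous_id.add (hcd.continuous.mul continuous_const)
    have key : ∀ z, |wδ z * t| ≤ C * |t| := fun z => by
      rw [abs_mul]; exact mul_le_mul_of_nonneg_right (hb z) (abs_nonneg t)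
    have h1 : (x - B) + wδ (x - B) * t ≤ x := by
      have := abs_le.mp (key (x - B)); simp only [hB] at *; linarith
    have h2 : x ≤ (x + B) + wδ (x + B) * t := by
      have := abs_le.mp (key (x + B)); simp only [hB] at *; linarith
    have hab : x - B ≤ x + B := by
      have : 0 ≤ B := by positivity
      linarith
    obtain ⟨z, _, hz⟩ := intermediate_value_Icc hab hf.continuousOn ⟨h1, h2⟩
    exact ⟨z, hz⟩
  set ξ : ℝ → ℝ → ℝ := fun x t => Function.invFun (fun z : ℝ => z + wδ z * t) x with hξdef
  have hright : ∀ x t : ℝ, ξ x t + wδ (ξ x t) * t = x := fun x t =>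
    Function.invFun_eq (hsurj t x)
  have hleft : ∀ z t : ℝ, -ε < t → ξ (z + wδ z * t) t = z := fun z t ht =>
    (hmono t ht).injective (hright (z + wδ z * t) t)
  set Φ : ℝ × ℝ → ℝ × ℝ := fun p => (p.1 + wδ p.1 * p.2, p.2) with hΦdef
  set Ψ : ℝ × ℝ → ℝ × ℝ := fun p => (ξ p.1 p.2, p.2) with hΨdef
  have hΦc : ContDiff ℝ (⊤:ℕ∞) Φ :=
    (contDiff_fst.add ((hcd.comp contDiff_fst).mul contDiff_snd)).prodMk contDiff_snd
  have hΦΨ : ∀ p : ℝ × ℝ, Φ (Ψ p) = p := fun p => Prod.ext (hright p.1 p.2) rfl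
  have hΨΦ : ∀ p : ℝ × ℝ, -ε < p.2 → Ψ (Φ p) = p := fun p hp =>
    Prod.ext (hleft p.1 p.2 hp) rfl
  -- smoothness of Ψ on the strip
  have hΨsmooth : ∀ q : ℝ × ℝ, -ε < q.2 → ContDiffAt ℝ (⊤:ℕ∞) Ψ q := by
    intro q hq
    set p : ℝ × ℝ := Ψ q with hpdef
    have hΦp : Φ p = q := hΦΨ q
    have hp : -ε < p.2 := hq
    have hc : 0 < 1 + deriv wδ p.1 * p.2 := hstrip p.1 p.2 hp
    set c : ℝ := 1 + deriv wδ p.1 * p.2 with hcdef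
    have hcne : c ≠ 0 := ne_of_gt hc
    set A₁ : (ℝ × ℝ) →L[ℝ] ℝ × ℝ :=
      ((c • ContinuousLinearMap.fst ℝ ℝ ℝ + wδ p.1 • ContinuousLinearMap.snd ℝ ℝ ℝ).prod
        (ContinuousLinearMap.snd ℝ ℝ ℝ)) with hA₁
    set A₂ : (ℝ × ℝ) →L[ℝ] ℝ × ℝ :=
      ((c⁻¹ • (ContinuousLinearMap.fst ℝ ℝ ℝ - wδ p.1 • ContinuousLinearMap.snd ℝ ℝ ℝ)).prod
        (ContinuousLinearMap.snd ℝ ℝ ℝ)) with hA₂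
    have hinv1 : Function.LeftInverse A₂ A₁ := by
      rintro ⟨u, v⟩
      apply Prod.ext
      · simp only [hA₁, hA₂, ContinuousLinearMap.prod_apply, ContinuousLinearMap.add_apply,
          ContinuousLinearMap.sub_apply, ContinuousLinearMap.smul_apply,
          ContinuousLinearMap.coe_fst', ContinuousLinearMap.coe_snd', smul_eq_mul]
        field_simp
        ring
      · rfl
    have hinv2 : Function.RightInverse A₂ A₁ := by
      rintro ⟨u, v⟩
      apply Prod.ext
      · simp only [hA₁, hA₂, ContinuousLinearMap.prod_apply, ContinuousLinearMap.add_apply,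
          ContinuousLinearMap.sub_apply, ContinuousLinearMap.smul_apply,
          ContinuousLinearMap.coe_fst', ContinuousLinearMap.coe_snd', smul_eq_mul]
        field_simp
        ring
      · rfl
    set A : (ℝ × ℝ) ≃L[ℝ] ℝ × ℝ := ContinuousLinearEquiv.equivOfInverse A₁ A₂ hinv1 hinv2
      with hAdef
    have hAfd : HasFDerivAt Φ (A : (ℝ × ℝ) →L[ℝ] ℝ × ℝ) p := by
      show HasFDerivAt Φ A₁ p
      have hw1 : HasFDerivAt (fun q : ℝ × ℝ => wδ q.1)
          (deriv wδ p.1 • ContinuousLinearMap.fst ℝ ℝ ℝ) p :=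
        (hD p.1).comp_hasFDerivAt p hasFDerivAt_fst
      have hmul := hw1.mul (hasFDerivAt_snd (p := p))
      have hsum := (hasFDerivAt_fst (p := p)).add hmul
      have h := hsum.prodMk (hasFDerivAt_snd (p := p))
      refine h.congr_fderiv ?_
      apply ContinuousLinearMap.ext
      intro q
      apply Prod.ext
      · simp [hA₁, hcdef]; ring
      · simp [hA₁]
    have hfa : ContDiffAt ℝ (⊤:ℕ∞) Φ p := hΦc.contDiffAt
    have hS : HasStrictFDerivAt Φ (A : (ℝ × ℝ) →L[ℝ] ℝ × ℝ) p :=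
      hfa.hasStrictFDerivAt' hAfd (by simp)
    have hevstrip : ∀ᶠ y in nhds p, Ψ (Φ y) = y := by
      have hopen : IsOpen {y : ℝ × ℝ | -ε < y.2} := isOpen_lt continuous_const continuous_snd
      filter_upwards [hopen.mem_nhds hp] with y hy using hΨΦ y hy
    have huniq := hS.localInverse_unique hevstrip
    have hloc : ContDiffAt ℝ (⊤:ℕ∞) (hS.localInverse Φ A p) (Φ p) :=
      hfa.to_localInverse hAfd (by simp)
    have := hloc.congr_of_eventuallyEq huniq
    rwa [hΦp] at this
  constructor
  · intro t ht
    have htm : -ε < t := lt_of_lt_of_le (by linarith) ht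
    exact ⟨hmono t htm, (hmono t htm).injective, fun x => hsurj t x⟩
  · intro x₀ hx₀ w hw
    have hx₀ξ : ∀ x t : ℝ, 0 ≤ t → x₀ x t = ξ x t := by
      intro x t ht
      have htm : -ε < t := lt_of_lt_of_le (by linarith) ht
      apply (hmono t htm).injective
      show x₀ x t + wδ (x₀ x t) * t = ξ x t + wδ (ξ x t) * t
      rw [hx₀ x t ht, hright x t]
    have hkey : ∀ x t : ℝ, 0 ≤ t →
        deriv (fun z => w z t) x = deriv wδ (x₀ x t) / (1 + t * deriv wδ (x₀ x t)) ∧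
        derivWithin (fun s => w x s) (Set.Ici 0) t
          = -(wδ (x₀ x t) * deriv wδ (x₀ x t)) / (1 + t * deriv wδ (x₀ x t)) := by
      intro x t ht
      have htm : -ε < t := lt_of_lt_of_le (by linarith) ht
      have hE : 0 < 1 + deriv wδ (ξ x t) * t := hstrip (ξ x t) t htm
      have hEne : (1 + deriv wδ (ξ x t) * t) ≠ 0 := ne_of_gt hE
      have hΨat : ContDiffAt ℝ (⊤:ℕ∞) Ψ (x, t) := hΨsmooth (x, t) htm
      have hdiff : DifferentiableAt ℝ Ψ (x, t) := hΨat.differentiableAt (by simp)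
      have hFD : HasFDerivAt Ψ (fderiv ℝ Ψ (x, t)) (x, t) := hdiff.hasFDerivAt
      -- partial derivative in x
      have hline : HasDerivAt (fun z : ℝ => (z, t)) ((1, 0) : ℝ × ℝ) x :=
        (hasDerivAt_id x).prodMk (hasDerivAt_const x t)
      have hcompx := hFD.comp_hasDerivAt x hline
      have hx' : HasDerivAt (fun z => ξ z t) ((fderiv ℝ Ψ (x, t) (1, 0)).1) x :=
        (hasFDerivAt_fst (p := (Ψ ∘ fun z : ℝ => (z, t)) x)).comp_hasDerivAt x hcompx
      set rx : ℝ := (fderiv ℝ Ψ (x, t) (1, 0)).1 with hrxdef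
      -- partial derivative in t
      have hline2 : HasDerivAt (fun s : ℝ => (x, s)) ((0, 1) : ℝ × ℝ) t :=
        (hasDerivAt_const t x).prodMk (hasDerivAt_id t)
      have hcompt := hFD.comp_hasDerivAt t hline2
      have ht' : HasDerivAt (fun s => ξ x s) ((fderiv ℝ Ψ (x, t) (0, 1)).1) t :=
        (hasFDerivAt_fst (p := (Ψ ∘ fun s : ℝ => (x, s)) t)).comp_hasDerivAt t hcompt
      set rt : ℝ := (fderiv ℝ Ψ (x, t) (0, 1)).1 with hrtdef
      -- differentiate the identity in x
      have hidl : HasDerivAt (fun z => ξ z t + wδ (ξ z t) * t)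
          (rx + deriv wδ (ξ x t) * rx * t) x :=
        hx'.add (((hD (ξ x t)).comp x hx').mul_const t)
      have hfun1 : (fun z => ξ z t + wδ (ξ z t) * t) = fun z : ℝ => z :=
        funext fun z => hright z t
      rw [hfun1] at hidl
      have h1 : rx + deriv wδ (ξ x t) * rx * t = 1 := hidl.unique (hasDerivAt_id x)
      -- differentiate the identity in t
      have hidt : HasDerivAt (fun s => ξ x s + wδ (ξ x s) * s)
          (rt + (deriv wδ (ξ x t) * rt * t + wδ (ξ x t) * 1)) t :=
        ht'.add (((hD (ξ x t)).comp t ht').mul (hasDerivAt_id t))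
      have hfun2 : (fun s => ξ x s + wδ (ξ x s) * s) = fun _ : ℝ => x :=
        funext fun s => hright x s
      rw [hfun2] at hidt
      have h2 : rt + (deriv wδ (ξ x t) * rt * t + wδ (ξ x t) * 1) = 0 :=
        hidt.unique (hasDerivAt_const t x)
      have hrx : rx = 1 / (1 + deriv wδ (ξ x t) * t) := by
        rw [eq_div_iff hEne]
        linear_combination h1
      have hrt : rt = -(wδ (ξ x t)) / (1 + deriv wδ (ξ x t) * t) := by
        rw [eq_div_iff hEne]
        linear_combination h2
      constructor
      · -- spatial derivative
        have hfun3 : (fun z => w z t) = fun z => wδ (ξ z t) :=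
          funext fun z => by rw [hw z t ht, hx₀ξ z t ht]
        have hwx : HasDerivAt (fun z => wδ (ξ z t)) (deriv wδ (ξ x t) * rx) x :=
          (hD (ξ x t)).comp x hx'
        rw [hfun3, hwx.deriv, hx₀ξ x t ht, hrx, mul_comm t (deriv wδ (ξ x t))]
        ring
      · -- time derivative
        have hwt : HasDerivAt (fun s => wδ (ξ x s)) (deriv wδ (ξ x t) * rt) t :=
          (hD (ξ x t)).comp t ht'
        have hwith : HasDerivWithinAt (fun s => w x s) (deriv wδ (ξ x t) * rt)
            (Set.Ici 0) t := by
          apply hwt.hasDerivWithinAt.congr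
          · intro s hs
            rw [hw x s hs, hx₀ξ x s hs]
          · rw [hw x t ht, hx₀ξ x t ht]
        rw [hwith.derivWithin (uniqueDiffOn_Ici 0 t ht), hx₀ξ x t ht, hrt,
          mul_comm t (deriv wδ (ξ x t))]
        ring
    refine ⟨?_, ?_, ?_, ?_, ?_⟩
    · -- smoothness
      apply ContDiffOn.congr (f := fun q : ℝ × ℝ => wδ (ξ q.1 q.2))
      · intro q hq
        have hq2 : (0:ℝ) ≤ q.2 := hq.2
        have hqm : -ε < q.2 := lt_of_lt_of_le (by linarith) hq2
        have h1 : ContDiffAt ℝ (⊤:ℕ∞) (fun q : ℝ × ℝ => wδ (ξ q.1 q.2)) q :=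
          hcd.contDiffAt.comp q (hΨsmooth q hqm).fst
        exact h1.contDiffWithinAt
      · intro q hq
        have hq2 : (0:ℝ) ≤ q.2 := hq.2
        rw [hw q.1 q.2 hq2, hx₀ξ q.1 q.2 hq2]
    · -- initial condition
      intro x
      have h0 := hx₀ x 0 le_rfl
      simp only [mul_zero, add_zero] at h0
      rw [hw x 0 le_rfl, h0]
    · -- Burgers equation
      intro x t ht
      rw [(hkey x t ht).1, (hkey x t ht).2, hw x t ht]
      ring
    · exact fun x t ht => (hkey x t ht).1
    · exact fun x t ht => (hkey x t ht).2

end BurgersAux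

open BurgersAux in
/-- for each t ≥ 0 the map x₀ ↦ x₀ + w_δ(x₀) t is a strictly
increasing bijection of ℝ; the function w(x,t) = w_δ(x₀(x,t)) (with x₀(·,t)
the inverse map) is smooth on ℝ × [0,∞), satisfies the initial condition and
the Burgers equation, and its derivatives are given by the implicit formulas
∂ₓw = w_δ′(x₀)/(1 + t w_δ′(x₀)) and ∂ₜw = −w_δ(x₀) w_δ′(x₀)/(1 + t w_δ′(x₀)). -/
theorem burgers_implicit_solution_properties
    (wm wp δ : ℝ) (hw : wm < wp) (hδ : 0 < δ)
    (wδ : ℝ → ℝ)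
    (hwδ : ∀ x, wδ x = (wp + wm) / 2 + (wp - wm) / 2 * Real.tanh (x / δ)) :
    (∀ t : ℝ, 0 ≤ t →
      StrictMono (fun z : ℝ => z + wδ z * t) ∧
      Function.Bijective (fun z : ℝ => z + wδ z * t)) ∧
    (∀ x₀ : ℝ → ℝ → ℝ,
      (∀ x t : ℝ, 0 ≤ t → x₀ x t + wδ (x₀ x t) * t = x) →
      ∀ w : ℝ → ℝ → ℝ,
        (∀ x t : ℝ, 0 ≤ t → w x t = wδ (x₀ x t)) →
        ContDiffOn ℝ (⊤ : ℕ∞) (fun q : ℝ × ℝ => w q.1 q.2)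
          (Set.univ ×ˢ Set.Ici 0) ∧
        (∀ x : ℝ, w x 0 = wδ x) ∧
        (∀ x t : ℝ, 0 ≤ t →
          derivWithin (fun s => w x s) (Set.Ici 0) t
              + w x t * deriv (fun z => w z t) x = 0) ∧
        (∀ x t : ℝ, 0 ≤ t →
          deriv (fun z => w z t) x
            = deriv wδ (x₀ x t) / (1 + t * deriv wδ (x₀ x t))) ∧
        (∀ x t : ℝ, 0 ≤ t →
          derivWithin (fun s => w x s) (Set.Ici 0) t
            = -(wδ (x₀ x t) * deriv wδ (x₀ x t)) / (1 + t * deriv wδ (x₀ x t)))) := by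
  have hcd : ContDiff ℝ (⊤:ℕ∞) wδ :=
    (wD_contDiff wm wp δ hw hδ wδ hwδ).of_le (mod_cast le_top)
  have hD : ∀ z, HasDerivAt wδ (deriv wδ z) z := by
    intro z
    have h := wD_hasDerivAt wm wp δ hw hδ wδ hwδ z
    rw [wD_deriv wm wp δ hw hδ wδ hwδ z]
    exact h
  have hM : 0 < (wp - wm) / 2 / δ := div_pos (by linarith) hδ
  exact burgers_aux wδ hcd hD ((wp - wm) / 2 / δ) (|(wp + wm) / 2| + |(wp - wm) / 2|) hM
    (wD_deriv_pos wm wp δ hw hδ wδ hwδ) (wD_deriv_le wm wp δ hw hδ wδ hwδ)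
    (wD_abs_le wm wp δ hw hδ wδ hwδ)
end

section
/- Let γ > 1, k > 0 and u_- ∈ ℝ, let I ⊆ ℝ be an open interval, and let w : ℝ × I → ℝ be a C² solution of the Burgers equation w_t + w w_x = 0 with w(x,t) > u_- for all (x,t). Define ū = (2w + (γ−1)u_-)/(γ+1), ρ̄ = ((γ−1)(ū − u_-)/(2k))^{2/(γ−1)}, θ̄ = (k²/(γ(γ−1))) ρ̄^{γ−1}, and p̄ = (γ−1) ρ̄ θ̄. Then (ρ̄, ū, θ̄) solves the full compressible Euler system: ρ̄_t + (ρ̄ ū)_x = 0, (ρ̄ ū)_t + (ρ̄ ū² + p̄)_x = 0, and [ρ̄(θ̄ + ū²/2)]_t + [ρ̄ ū (θ̄ + ū²/2) + ū p̄]_x = 0, at every point of ℝ × I. -/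
/-!
Every state variable of the wave is a function of `w`, so each conservation law reads
`F(w)_t + G(w)_x = 0`. By the chain rule its left side is `F'(w) w_t + G'(w) w_x`, which is
`F'(w) (w_t + w w_x) = 0` as soon as `G'(r) = r F'(r)`. For the mass, momentum and energy pairs
`(F, G)` this identity follows from three pointwise relations of the profile `(ρ, u, θ)` in `r`:
`ρ u' = (r - u) ρ'` (constant Riemann invariant together with `λ₃ = r`),
`ρ θ' = (γ - 1) θ ρ'` (the wave is isentropic) and `(r - u)² = γ (γ - 1) θ`
(`r - u` is the sound speed).
-/

open Real

def BurgersCompatible (F G : ℝ → ℝ) (r : ℝ) : Prop :=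
  ∃ d, HasDerivAt F d r ∧ HasDerivAt G (r * d) r

theorem BurgersCompatible.deriv_add_deriv_eq_zero {F G : ℝ → ℝ} {w : ℝ → ℝ → ℝ} {x t : ℝ}
    (hFG : BurgersCompatible F G (w x t))
    (hw : DifferentiableAt ℝ (fun q : ℝ × ℝ => w q.1 q.2) (x, t))
    (hB : deriv (fun s => w x s) t + w x t * deriv (fun z => w z t) x = 0) :
    deriv (fun s => F (w x s)) t + deriv (fun z => G (w z t)) x = 0 := by
  obtain ⟨d, hF, hG⟩ := hFG
  have hwt : DifferentiableAt ℝ (fun s => w x s) t :=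
    hw.comp (f := fun s => (x, s)) t (by fun_prop)
  have hwx : DifferentiableAt ℝ (fun z => w z t) x :=
    hw.comp (f := fun z => (z, t)) x (by fun_prop)
  have hFt : HasDerivAt (fun s => F (w x s)) (d * deriv (fun s => w x s) t) t :=
    hF.comp t hwt.hasDerivAt
  have hGx : HasDerivAt (fun z => G (w z t)) (w x t * d * deriv (fun z => w z t) x) x :=
    hG.comp x hwx.hasDerivAt
  rw [hFt.deriv, hGx.deriv]
  linear_combination d * hB

section SimpleWave

variable {ρ u θ : ℝ → ℝ} {γ r dρ du dθ : ℝ}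

theorem burgersCompatible_mass (hρ : HasDerivAt ρ dρ r) (hu : HasDerivAt u du r)
    (hchar : ρ r * du = (r - u r) * dρ) :
    BurgersCompatible ρ (fun s => ρ s * u s) r :=
  ⟨dρ, hρ, (hρ.mul hu).congr_deriv (by linear_combination hchar)⟩

theorem burgersCompatible_momentum (hρ : HasDerivAt ρ dρ r) (hu : HasDerivAt u du r)
    (hθ : HasDerivAt θ dθ r) (hchar : ρ r * du = (r - u r) * dρ)
    (hisen : ρ r * dθ = (γ - 1) * θ r * dρ) (hsound : (r - u r) ^ 2 = γ * (γ - 1) * θ r) :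
    BurgersCompatible (fun s => ρ s * u s)
      (fun s => ρ s * u s ^ 2 + (γ - 1) * ρ s * θ s) r := by
  refine ⟨r * dρ, (hρ.mul hu).congr_deriv (by linear_combination hchar), ?_⟩
  refine ((hρ.mul (hu.pow 2)).add ((hρ.const_mul (γ - 1)).mul hθ)).congr_deriv ?_
  simp only [Pi.pow_apply, Nat.cast_ofNat]
  linear_combination (2 * u r) * hchar + (γ - 1) * hisen - dρ * hsound

theorem burgersCompatible_energy (hρ : HasDerivAt ρ dρ r) (hu : HasDerivAt u du r)
    (hθ : HasDerivAt θ dθ r) (hchar : ρ r * du = (r - u r) * dρ)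
    (hisen : ρ r * dθ = (γ - 1) * θ r * dρ) (hsound : (r - u r) ^ 2 = γ * (γ - 1) * θ r) :
    BurgersCompatible (fun s => ρ s * (θ s + u s ^ 2 / 2))
      (fun s => ρ s * u s * (θ s + u s ^ 2 / 2) + u s * ((γ - 1) * ρ s * θ s)) r := by
  have hE := hθ.add ((hu.pow 2).div_const 2)
  refine ⟨_, hρ.mul hE, ?_⟩
  refine (((hρ.mul hu).mul hE).add (hu.mul ((hρ.const_mul (γ - 1)).mul hθ))).congr_deriv ?_
  simp only [Pi.add_apply, Pi.mul_apply, Pi.pow_apply, Nat.cast_ofNat]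
  linear_combination (γ * θ r + u r ^ 2 / 2 - (r - u r) * u r) * hchar
    + ((γ - 1) * u r - (r - u r)) * hisen - u r * dρ * hsound

end SimpleWave

noncomputable section RarefactionProfile

variable {γ k um r : ℝ}

def rarefactionVelocity (γ um r : ℝ) : ℝ := (2 * r + (γ - 1) * um) / (γ + 1)

def rarefactionDensity (γ k um r : ℝ) : ℝ :=
  ((γ - 1) * (rarefactionVelocity γ um r - um) / (2 * k)) ^ (2 / (γ - 1))

def rarefactionTemperature (γ k um r : ℝ) : ℝ :=
  k ^ 2 / (γ * (γ - 1)) * rarefactionDensity γ k um r ^ (γ - 1)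

theorem hasDerivAt_rarefactionVelocity :
    HasDerivAt (rarefactionVelocity γ um) (2 / (γ + 1)) r := by
  unfold rarefactionVelocity
  simpa using (((hasDerivAt_id r).const_mul 2).add_const ((γ - 1) * um)).div_const (γ + 1)

/-- The base of the power defining the density is `ρ ^ ((γ - 1) / 2)`, and `k` times it is the
sound speed. -/
theorem sub_rarefactionVelocity (hγ : γ + 1 ≠ 0) (hk : k ≠ 0) :
    r - rarefactionVelocity γ um r =
      k * ((γ - 1) * (rarefactionVelocity γ um r - um) / (2 * k)) := by
  unfold rarefactionVelocity
  field_simp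
  ring

theorem sub_rarefactionVelocity_pos (hγ : 1 < γ) (hr : um < r) :
    0 < r - rarefactionVelocity γ um r := by
  have : r - rarefactionVelocity γ um r = (γ - 1) * (r - um) / (γ + 1) := by
    unfold rarefactionVelocity
    field_simp
    ring
  rw [this]
  exact div_pos (mul_pos (by linarith) (by linarith)) (by linarith)

theorem rarefactionDensity_base_pos (hγ : 1 < γ) (hk : 0 < k) (hr : um < r) :
    0 < (γ - 1) * (rarefactionVelocity γ um r - um) / (2 * k) := by
  have h := sub_rarefactionVelocity_pos hγ hr
  rw [sub_rarefactionVelocity (by linarith) hk.ne'] at h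
  exact pos_of_mul_pos_right h hk.le

theorem hasDerivAt_rarefactionDensity (hγ : 1 < γ) (hk : 0 < k) (hr : um < r) :
    HasDerivAt (rarefactionDensity γ k um)
      (2 / (γ + 1) * rarefactionDensity γ k um r / (r - rarefactionVelocity γ um r)) r := by
  have hb := rarefactionDensity_base_pos hγ hk hr
  have hbase := ((hasDerivAt_rarefactionVelocity (γ := γ) (um := um) (r := r)).sub_const um
    |>.const_mul (γ - 1)).div_const (2 * k)
  refine (hbase.rpow_const (p := 2 / (γ - 1)) (Or.inl hb.ne')).congr_deriv ?_
  rw [sub_rarefactionVelocity (by linarith) hk.ne', rpow_sub_one hb.ne', rarefactionDensity]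
  have : γ - 1 ≠ 0 := by linarith
  field_simp

theorem hasDerivAt_rarefactionTemperature {dρ : ℝ}
    (hρ : HasDerivAt (rarefactionDensity γ k um) dρ r)
    (hpos : 0 < rarefactionDensity γ k um r) :
    HasDerivAt (rarefactionTemperature γ k um)
      ((γ - 1) * rarefactionTemperature γ k um r / rarefactionDensity γ k um r * dρ) r := by
  refine ((hρ.rpow_const (p := γ - 1) (Or.inl hpos.ne')).const_mul _).congr_deriv ?_
  rw [rpow_sub_one hpos.ne', rarefactionTemperature]
  ring

theorem sq_sub_rarefactionVelocity (hγ : 1 < γ) (hk : 0 < k) (hr : um < r) :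
    (r - rarefactionVelocity γ um r) ^ 2 = γ * (γ - 1) * rarefactionTemperature γ k um r := by
  have hb := rarefactionDensity_base_pos hγ hk hr
  have hexp : 2 / (γ - 1) * (γ - 1) = 2 := by field_simp [show γ - 1 ≠ 0 by linarith]
  rw [sub_rarefactionVelocity (by linarith) hk.ne', rarefactionTemperature, rarefactionDensity,
    ← rpow_mul hb.le, hexp, rpow_two]
  field_simp [show γ - 1 ≠ 0 by linarith, show γ ≠ 0 by linarith]

theorem rarefaction_simpleWave_relations (hγ : 1 < γ) (hk : 0 < k) (hr : um < r) :
    ∃ dρ dθ, HasDerivAt (rarefactionDensity γ k um) dρ r ∧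
      HasDerivAt (rarefactionTemperature γ k um) dθ r ∧
      rarefactionDensity γ k um r * (2 / (γ + 1)) = (r - rarefactionVelocity γ um r) * dρ ∧
      rarefactionDensity γ k um r * dθ = (γ - 1) * rarefactionTemperature γ k um r * dρ ∧
      (r - rarefactionVelocity γ um r) ^ 2 = γ * (γ - 1) * rarefactionTemperature γ k um r := by
  have hρ := hasDerivAt_rarefactionDensity hγ hk hr
  have hpos : 0 < rarefactionDensity γ k um r :=
    rpow_pos_of_pos (rarefactionDensity_base_pos hγ hk hr) _
  have hc := (sub_rarefactionVelocity_pos hγ hr).ne'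
  refine ⟨_, _, hρ, hasDerivAt_rarefactionTemperature hρ hpos, ?_, ?_,
    sq_sub_rarefactionVelocity hγ hk hr⟩
  · field_simp
  · field_simp

end RarefactionProfile

theorem approximate_rarefaction_solves_euler_general
    (γ k um : ℝ) (hγ : 1 < γ) (hk : 0 < k)
    (I : Set ℝ) (hIopen : IsOpen I)
    (w : ℝ → ℝ → ℝ)
    (hwC2 : ContDiffOn ℝ 2 (fun q : ℝ × ℝ => w q.1 q.2) (Set.univ ×ˢ I))
    (hwgt : ∀ x t, w x t > um)
    (hwB : ∀ x : ℝ, ∀ t ∈ I,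
      deriv (fun s => w x s) t + w x t * deriv (fun z => w z t) x = 0)
    (ub ρb θb pb : ℝ → ℝ → ℝ)
    (hub : ∀ x t, ub x t = (2 * w x t + (γ - 1) * um) / (γ + 1))
    (hρb : ∀ x t, ρb x t = ((γ - 1) * (ub x t - um) / (2 * k)) ^ (2 / (γ - 1)))
    (hθb : ∀ x t, θb x t = k ^ 2 / (γ * (γ - 1)) * ρb x t ^ (γ - 1))
    (hpb : ∀ x t, pb x t = (γ - 1) * ρb x t * θb x t) :
    ∀ x : ℝ, ∀ t ∈ I,
      (deriv (fun s => ρb x s) t + deriv (fun z => ρb z t * ub z t) x = 0) ∧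
      (deriv (fun s => ρb x s * ub x s) t
        + deriv (fun z => ρb z t * ub z t ^ 2 + pb z t) x = 0) ∧
      (deriv (fun s => ρb x s * (θb x s + ub x s ^ 2 / 2)) t
        + deriv (fun z =>
            ρb z t * ub z t * (θb z t + ub z t ^ 2 / 2) + ub z t * pb z t) x
        = 0) := by
  intro x t ht
  obtain rfl : ub = fun x t => rarefactionVelocity γ um (w x t) := funext₂ hub
  obtain rfl : ρb = fun x t => rarefactionDensity γ k um (w x t) := funext₂ hρb
  obtain rfl : θb = fun x t => rarefactionTemperature γ k um (w x t) := funext₂ hθb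
  obtain rfl := funext₂ hpb
  have hw : DifferentiableAt ℝ (fun q : ℝ × ℝ => w q.1 q.2) (x, t) :=
    (hwC2.contDiffAt ((isOpen_univ.prod hIopen).mem_nhds ⟨trivial, ht⟩)).differentiableAt
      (by norm_num)
  have hB := hwB x t ht
  have hu := hasDerivAt_rarefactionVelocity (γ := γ) (um := um) (r := w x t)
  obtain ⟨dρ, dθ, hρ, hθ, hchar, hisen, hsound⟩ :=
    rarefaction_simpleWave_relations hγ hk (hwgt x t)
  exact ⟨(burgersCompatible_mass hρ hu hchar).deriv_add_deriv_eq_zero hw hB,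
    (burgersCompatible_momentum hρ hu hθ hchar hisen hsound).deriv_add_deriv_eq_zero hw hB,
    (burgersCompatible_energy hρ hu hθ hchar hisen hsound).deriv_add_deriv_eq_zero hw hB⟩

/-- the approximate 3-rarefaction wave (ρ̄, ū, θ̄) built from a C²
solution w of the Burgers equation (via λ₃ = w and constancy of the 3-Riemann
invariant) is an exact solution of the full compressible Euler system. -/
theorem approximate_rarefaction_solves_euler
    (γ k um : ℝ) (hγ : 1 < γ) (hk : 0 < k)
    (I : Set ℝ) (hIopen : IsOpen I) (hIconn : I.OrdConnected)
    (w : ℝ → ℝ → ℝ)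
    (hwC2 : ContDiffOn ℝ 2 (fun q : ℝ × ℝ => w q.1 q.2) (Set.univ ×ˢ I))
    (hwgt : ∀ x t, w x t > um)
    (hwB : ∀ x : ℝ, ∀ t ∈ I,
      deriv (fun s => w x s) t + w x t * deriv (fun z => w z t) x = 0)
    (ub ρb θb pb : ℝ → ℝ → ℝ)
    (hub : ∀ x t, ub x t = (2 * w x t + (γ - 1) * um) / (γ + 1))
    (hρb : ∀ x t, ρb x t = ((γ - 1) * (ub x t - um) / (2 * k)) ^ (2 / (γ - 1)))
    (hθb : ∀ x t, θb x t = k ^ 2 / (γ * (γ - 1)) * ρb x t ^ (γ - 1))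
    (hpb : ∀ x t, pb x t = (γ - 1) * ρb x t * θb x t) :
    ∀ x : ℝ, ∀ t ∈ I,
      (deriv (fun s => ρb x s) t + deriv (fun z => ρb z t * ub z t) x = 0) ∧
      (deriv (fun s => ρb x s * ub x s) t
        + deriv (fun z => ρb z t * ub z t ^ 2 + pb z t) x = 0) ∧
      (deriv (fun s => ρb x s * (θb x s + ub x s ^ 2 / 2)) t
        + deriv (fun z =>
            ρb z t * ub z t * (θb z t + ub z t ^ 2 / 2) + ub z t * pb z t) x
        = 0) :=
  approximate_rarefaction_solves_euler_general γ k um hγ hk I hIopen w hwC2 hwgt hwB ub ρb θb pb hub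
    hρb hθb hpb
end

section
/- Let γ > 1. There exist constants C > 0 and ε₀ ∈ (0,1) such that for all ρ̄, θ̄, ρ, θ > 0 and u, ū ∈ ℝ with |θ/θ̄ − 1| ≤ ε₀ and |ρ̄/ρ − 1| ≤ ε₀, the quantity H = ρψ² + (γ−1) ρ θ̄ Φ(θ/θ̄) + (γ−1)² ρ θ̄ Φ(ρ̄/ρ) + √((γ−1)/γ) θ̄^{1/2} ρ ψ [(γ−1) log(ρ̄/ρ) + log(θ/θ̄)], where ψ = u − ū and Φ(z) = z − log z − 1, satisfies H ≥ C [ρ̄ ψ² + (θ̄/ρ̄) φ² + (ρ̄/θ̄) ζ²], where φ = ρ − ρ̄ and ζ = θ − θ̄. -/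
/-!
Write `a = θ/θ̄`, `b = ρ̄/ρ` and `X = √((γ-1)/γ) √θ̄ ((γ-1) log b + log a)`, so that the last term
of `H` is `ρ ψ X`. For `z ≥ 1/2` one has `Φ(z) ≥ (5/16) (log z)²`, and by Cauchy–Schwarz
`X² ≤ Q := (γ-1) θ̄ ((log a)² + (γ-1) (log b)²)`. Since `5/16 > 1/4`, the form
`ψ² + ψ X + (5/16) Q` still dominates `ψ²/9 + Q/32`, whence `H ≥ ρ (ψ²/9 + Q/32)`.
On `[1/2, 3/2]` we have `|z - 1| ≤ (3/2) |log z|`, and `ρ, ρ̄` are comparable there, which turns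
the logarithms back into `φ` and `ζ`; so `ε₀ = 1/2` works.
-/

open Real

lemma five_div_sixteen_mul_sq_le_exp_sub_sub_one {t : ℝ} (ht : -1 ≤ t) :
    5 / 16 * t ^ 2 ≤ exp t - t - 1 := by
  have hexp : exp t = exp (t / 4) ^ 4 := by
    rw [← Real.exp_nat_mul]; ring_nf
  have hpow : (1 + t / 4) ^ 4 ≤ exp (t / 4) ^ 4 :=
    pow_le_pow_left₀ (by linarith) (by linarith [add_one_le_exp (t / 4)]) 4
  nlinarith [mul_nonneg (sq_nonneg t) (by linarith : (0 : ℝ) ≤ t + 1), sq_nonneg (t ^ 2)]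

lemma neg_one_le_log_of_one_half_le {z : ℝ} (hz : 1 / 2 ≤ z) : -1 ≤ log z := by
  have h := one_sub_inv_le_log_of_pos (by linarith : 0 < z)
  have : z⁻¹ ≤ 2 := by rw [inv_le_comm₀ (by linarith) two_pos]; linarith
  linarith

lemma five_div_sixteen_mul_log_sq_le_sub_log_sub_one {z : ℝ} (hz : 1 / 2 ≤ z) :
    5 / 16 * log z ^ 2 ≤ z - log z - 1 := by
  simpa only [exp_log (by linarith : 0 < z)] using
    five_div_sixteen_mul_sq_le_exp_sub_sub_one (neg_one_le_log_of_one_half_le hz)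

lemma sub_one_sq_le_sq_mul_log_sq {z M : ℝ} (hz : 0 < z) (hzM : z ≤ M) (hM : 1 ≤ M) :
    (z - 1) ^ 2 ≤ M ^ 2 * log z ^ 2 := by
  rcases le_or_gt 1 z with h1 | h1
  · have hlog : z - 1 ≤ z * log z :=
      calc z - 1 = z * (1 - z⁻¹) := by field_simp
        _ ≤ z * log z := by gcongr; exact one_sub_inv_le_log_of_pos hz
    calc (z - 1) ^ 2 ≤ (z * log z) ^ 2 := pow_le_pow_left₀ (by linarith) hlog 2
      _ ≤ M ^ 2 * log z ^ 2 := by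
        rw [mul_pow]; gcongr
  · have hlog := log_le_sub_one_of_pos hz
    calc (z - 1) ^ 2 ≤ log z ^ 2 := by nlinarith
      _ ≤ M ^ 2 * log z ^ 2 := le_mul_of_one_le_left (sq_nonneg _) (one_le_pow₀ hM)

lemma sq_sub_le_sq_mul_log_div_sq {x y M : ℝ} (hx : 0 < x) (hy : 0 < y) (hyx : y / x ≤ M)
    (hM : 1 ≤ M) :
    (y - x) ^ 2 ≤ M ^ 2 * x ^ 2 * log (y / x) ^ 2 := by
  have h := sub_one_sq_le_sq_mul_log_sq (div_pos hy hx) hyx hM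
  have e : (y - x) ^ 2 = x ^ 2 * (y / x - 1) ^ 2 := by field_simp
  rw [e]; nlinarith [mul_le_mul_of_nonneg_left h (sq_nonneg x)]

lemma mul_add_sq_le_one_add_mul {a s t : ℝ} (ha : 0 ≤ a) :
    (a * s + t) ^ 2 ≤ (1 + a) * (t ^ 2 + a * s ^ 2) := by
  nlinarith [mul_nonneg ha (sq_nonneg (s - t))]

/-- `8/9 x² + x y + 9/32 y²` is the perfect square `(4x/3 + 3y/4)² / 2`. -/
lemma sq_div_nine_add_div_le {x y q : ℝ} (h : y ^ 2 ≤ q) :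
    x ^ 2 / 9 + q / 32 ≤ x ^ 2 + x * y + 5 / 16 * q := by
  nlinarith [sq_nonneg (4 * x / 3 + 3 * y / 4)]

lemma entropy_dissipation_lower_bound {γ ρ θb ψ a b : ℝ} (hγ : 1 < γ) (hρ : 0 ≤ ρ)
    (hθb : 0 ≤ θb) (ha : 1 / 2 ≤ a) (hb : 1 / 2 ≤ b) :
    ρ * (ψ ^ 2 / 9 + (γ - 1) * θb * (log a ^ 2 + (γ - 1) * log b ^ 2) / 32)
      ≤ ρ * ψ ^ 2 + (γ - 1) * ρ * θb * (a - log a - 1) + (γ - 1) ^ 2 * ρ * θb * (b - log b - 1)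
        + √((γ - 1) / γ) * √θb * ρ * ψ * ((γ - 1) * log b + log a) := by
  set Q := (γ - 1) * θb * (log a ^ 2 + (γ - 1) * log b ^ 2)
  set X := √((γ - 1) / γ) * √θb * ((γ - 1) * log b + log a)
  have hγ1 : 0 ≤ γ - 1 := by linarith
  have hX : X ^ 2 ≤ Q := by
    have hcs := mul_add_sq_le_one_add_mul (s := log b) (t := log a) hγ1
    calc X ^ 2 = (γ - 1) / γ * θb * ((γ - 1) * log b + log a) ^ 2 := by
          rw [mul_pow, mul_pow, sq_sqrt (by positivity), sq_sqrt hθb]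
      _ ≤ (γ - 1) / γ * θb * ((1 + (γ - 1)) * (log a ^ 2 + (γ - 1) * log b ^ 2)) := by
          gcongr
      _ = Q := by field_simp; ring
  have hΦ : 5 / 16 * Q
      ≤ (γ - 1) * θb * (a - log a - 1) + (γ - 1) ^ 2 * θb * (b - log b - 1) := by
    have hθbγ : 0 ≤ (γ - 1) * θb := by positivity
    nlinarith [mul_le_mul_of_nonneg_left (five_div_sixteen_mul_log_sq_le_sub_log_sub_one ha) hθbγ,
      mul_le_mul_of_nonneg_left (five_div_sixteen_mul_log_sq_le_sub_log_sub_one hb)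
        (mul_nonneg hθbγ hγ1)]
  have hquad := sq_div_nine_add_div_le (x := ψ) hX
  calc ρ * (ψ ^ 2 / 9 + Q / 32) ≤ ρ * (ψ ^ 2 + ψ * X + 5 / 16 * Q) := by gcongr
    _ ≤ _ := by linarith [mul_le_mul_of_nonneg_left hΦ hρ]

lemma weighted_perturbation_sq_le {ρb θb ρ θ ψ : ℝ} (hρb : 0 < ρb) (hθb : 0 < θb) (hρ : 0 < ρ)
    (hθ : 0 < θ) (hθε : |θ / θb - 1| ≤ 1 / 2) (hρε : |ρb / ρ - 1| ≤ 1 / 2) :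
    ρb * ψ ^ 2 + θb / ρb * (ρ - ρb) ^ 2 + ρb / θb * (θ - θb) ^ 2
      ≤ 3 / 2 * (ρ * ψ ^ 2) + 9 / 2 * (ρ * θb * log (ρb / ρ) ^ 2)
        + 27 / 8 * (ρ * θb * log (θ / θb) ^ 2) := by
  obtain ⟨-, ha_le⟩ := abs_le.mp hθε
  obtain ⟨hb_ge, hb_le⟩ := abs_le.mp hρε
  have hρb_le : ρb ≤ 3 / 2 * ρ := by rw [← div_le_iff₀ hρ]; linarith
  have hρ_le : ρ ≤ 2 * ρb := by
    have : 1 / 2 ≤ ρb / ρ := by linarith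
    rw [le_div_iff₀ hρ] at this; linarith
  have hζ_log := sq_sub_le_sq_mul_log_div_sq hθb hθ (by linarith) (by norm_num : (1 : ℝ) ≤ 3 / 2)
  have hφ_log := sq_sub_le_sq_mul_log_div_sq hρ hρb (by linarith) (by norm_num : (1 : ℝ) ≤ 3 / 2)
  have hψ : ρb * ψ ^ 2 ≤ 3 / 2 * (ρ * ψ ^ 2) := by
    nlinarith [mul_le_mul_of_nonneg_right hρb_le (sq_nonneg ψ)]
  have hφ : θb / ρb * (ρ - ρb) ^ 2 ≤ 9 / 2 * (ρ * θb * log (ρb / ρ) ^ 2) := by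
    rw [div_mul_eq_mul_div, div_le_iff₀ hρb]
    have : 0 ≤ ρ * θb * log (ρb / ρ) ^ 2 := by positivity
    nlinarith [mul_le_mul_of_nonneg_left hφ_log hθb.le, mul_le_mul_of_nonneg_left hρ_le this]
  have hζ : ρb / θb * (θ - θb) ^ 2 ≤ 27 / 8 * (ρ * θb * log (θ / θb) ^ 2) := by
    rw [div_mul_eq_mul_div, div_le_iff₀ hθb]
    have : 0 ≤ θb ^ 2 * log (θ / θb) ^ 2 := by positivity
    nlinarith [mul_le_mul_of_nonneg_left hζ_log hρb.le, mul_le_mul_of_nonneg_right hρb_le this]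
  linarith

/-- the entropy dissipation quantity H controls the weighted
quadratic quantity ρ̄ψ² + (θ̄/ρ̄)φ² + (ρ̄/θ̄)ζ², uniformly for states with
θ/θ̄ and ρ̄/ρ sufficiently close to 1. -/
theorem entropy_dissipation_coercivity
    (γ : ℝ) (hγ : 1 < γ)
    (Φ : ℝ → ℝ) (hΦ : ∀ z, Φ z = z - Real.log z - 1) :
    ∃ C > (0 : ℝ), ∃ ε₀ ∈ Set.Ioo (0 : ℝ) 1,
      ∀ ρb θb ρ θ u ub : ℝ,
        0 < ρb → 0 < θb → 0 < ρ → 0 < θ →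
        |θ / θb - 1| ≤ ε₀ → |ρb / ρ - 1| ≤ ε₀ →
        C * (ρb * (u - ub) ^ 2 + θb / ρb * (ρ - ρb) ^ 2 + ρb / θb * (θ - θb) ^ 2)
          ≤ ρ * (u - ub) ^ 2 + (γ - 1) * ρ * θb * Φ (θ / θb)
            + (γ - 1) ^ 2 * ρ * θb * Φ (ρb / ρ)
            + Real.sqrt ((γ - 1) / γ) * Real.sqrt θb * ρ * (u - ub)
              * ((γ - 1) * Real.log (ρb / ρ) + Real.log (θ / θb)) := by
  set m := min 1 (γ - 1)
  have hm : 0 < m := lt_min one_pos (by linarith)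
  have hm1 : m ^ 2 ≤ 1 := pow_le_one₀ hm.le (min_le_left _ _)
  have hmγ : m ^ 2 ≤ γ - 1 := by nlinarith [min_le_left 1 (γ - 1), min_le_right 1 (γ - 1)]
  have hmγ2 : m ^ 2 ≤ (γ - 1) ^ 2 := pow_le_pow_left₀ hm.le (min_le_right _ _) 2
  refine ⟨m ^ 2 / 144, by positivity, 1 / 2, by norm_num, ?_⟩
  intro ρb θb ρ θ u ub hρb hθb hρ hθ hθε hρε
  obtain ⟨hθ_ge, -⟩ := abs_le.mp hθε
  obtain ⟨hρb_ge, -⟩ := abs_le.mp hρε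
  have hH := entropy_dissipation_lower_bound (ψ := u - ub) hγ hρ.le hθb.le
    (by linarith : 1 / 2 ≤ θ / θb) (by linarith : 1 / 2 ≤ ρb / ρ)
  have hW := weighted_perturbation_sq_le (ψ := u - ub) hρb hθb hρ hθ hθε hρε
  rw [hΦ, hΦ]
  refine le_trans ?_ hH
  have hP : 0 ≤ ρ * (u - ub) ^ 2 := by positivity
  have hS : 0 ≤ ρ * θb * log (ρb / ρ) ^ 2 := by positivity
  have hT : 0 ≤ ρ * θb * log (θ / θb) ^ 2 := by positivity
  nlinarith [mul_le_mul_of_nonneg_left hW (by positivity : (0 : ℝ) ≤ m ^ 2 / 144),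
    mul_le_mul_of_nonneg_right hm1 hP, mul_le_mul_of_nonneg_right hmγ hT,
    mul_le_mul_of_nonneg_right hmγ2 hS]
end
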